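/- arXiv:1811.09872 — 7 statements merged into one kernel-verified Lean document; each statement's English description precedes it below -/
import Mathlib

section
/- Let π be a cyclic permutation of {1,...,N} and suppose π has two block structures, one of period p and one of period q, with p < q. Then p divides q. (A block structure of period k is a partition of {1,...,N} into k ≥ 2 nonempty segments of consecutive integers, with k < N, that are permuted by π.) -/
/-- `π` restricted to `{1,...,N}` is a cyclic permutation of `{1,...,N}`. -/
def IsCyclicOn (π : ℕ → ℕ) (N : ℕ) : Prop :=
  Set.BijOn π (Set.Icc 1 N) (Set.Icc 1 N) ∧
  ∃ x ∈ Finset.Icc 1 N, ∀ y ∈ Finset.Icc 1 N, ∃ m, π^[m] x = y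

/-- `π` has a block structure of period `k` on `{1,...,N}`: a partition into `k`
segments of consecutive integers (encoded by a monotone surjective block-assignment
`B`), with the blocks permuted by `π`. -/
def HasBlockStructure (π : ℕ → ℕ) (N k : ℕ) : Prop :=
  1 < k ∧ k < N ∧ ∃ B : ℕ → Fin k,
    MonotoneOn B (Set.Icc 1 N) ∧
    (∀ j : Fin k, ∃ i ∈ Finset.Icc 1 N, B i = j) ∧
    ∃ τ : Equiv.Perm (Fin k), ∀ i ∈ Finset.Icc 1 N, B (π i) = τ (B i)

open Function

/-- A monotone map into `Fin k` has at most `k - 1` jumps. -/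
lemma jump_card {k N : ℕ} (hN : 1 ≤ N) (B : ℕ → Fin k)
    (hB : MonotoneOn B (Set.Icc 1 N)) :
    ((Finset.Icc 1 (N - 1)).filter (fun i => B i ≠ B (i + 1))).card ≤ k - 1 := by
  classical
  have hmem : ∀ i ∈ (Finset.Icc 1 (N - 1)).filter (fun i => B i ≠ B (i + 1)),
      B (i + 1) ∈ (Finset.univ : Finset (Fin k)).erase (B 1) := by
    intro i hi
    simp only [Finset.mem_filter, Finset.mem_Icc] at hi
    obtain ⟨⟨h1, h2⟩, hne⟩ := hi
    have hiN : i ∈ Set.Icc 1 N := ⟨h1, by omega⟩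
    have hi1N : i + 1 ∈ Set.Icc 1 N := ⟨by omega, by omega⟩
    have h1N : (1 : ℕ) ∈ Set.Icc 1 N := ⟨le_refl _, hN⟩
    have hlt : B i < B (i + 1) := lt_of_le_of_ne (hB hiN hi1N (by omega)) hne
    have : B 1 ≤ B i := hB h1N hiN h1
    exact Finset.mem_erase.2 ⟨(lt_of_le_of_lt this hlt).ne', Finset.mem_univ _⟩
  have hinj : Set.InjOn (fun i => B (i + 1))
      ((Finset.Icc 1 (N - 1)).filter (fun i => B i ≠ B (i + 1))) := by
    intro i hi j hj hij
    simp only [Finset.coe_filter, Finset.mem_Icc, Set.mem_setOf_eq] at hi hj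
    by_contra hne
    rcases Nat.lt_or_ge i j with h | h
    · have h1 : B (i + 1) ≤ B j :=
        hB ⟨by omega, by omega⟩ ⟨by omega, by omega⟩ (by omega)
      have h2 : B j < B (j + 1) :=
        lt_of_le_of_ne (hB ⟨by omega, by omega⟩ ⟨by omega, by omega⟩ (by omega)) hj.2
      exact absurd hij (by exact ne_of_lt (lt_of_le_of_lt h1 h2))
    · have h : j < i := by omega
      have h1 : B (j + 1) ≤ B i :=
        hB ⟨by omega, by omega⟩ ⟨by omega, by omega⟩ (by omega)
      have h2 : B i < B (i + 1) :=
        lt_of_le_of_ne (hB ⟨by omega, by omega⟩ ⟨by omega, by omega⟩ (by omega)) hi.2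
      exact absurd hij.symm (by exact ne_of_lt (lt_of_le_of_lt h1 h2))
  calc ((Finset.Icc 1 (N - 1)).filter (fun i => B i ≠ B (i + 1))).card
      ≤ ((Finset.univ : Finset (Fin k)).erase (B 1)).card :=
        Finset.card_le_card_of_injOn _ hmem hinj
    _ = k - 1 := by rw [Finset.card_erase_of_mem (Finset.mem_univ _)]; simp

/-- The number of distinct values on `[1,N]` is at most `1 +` number of jumps. -/
lemma image_card_le {α : Type*} [DecidableEq α] {N : ℕ} (hN : 1 ≤ N) (C : ℕ → α)
    (P : ℕ → Prop) [DecidablePred P] (hP : ∀ i, 1 ≤ i → i ≤ N - 1 → C i ≠ C (i + 1) → P i) :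
    ((Finset.Icc 1 N).image C).card ≤ 1 + ((Finset.Icc 1 (N - 1)).filter P).card := by
  classical
  set T : Finset ℕ := {1} ∪ ((Finset.Icc 1 (N - 1)).filter P).image (· + 1) with hT
  have hmem : ∀ v ∈ (Finset.Icc 1 N).image C,
      sInf {i | 1 ≤ i ∧ i ≤ N ∧ C i = v} ∈ T := by
    intro v hv
    obtain ⟨i₀, hi₀, hCi₀⟩ := Finset.mem_image.1 hv
    simp only [Finset.mem_Icc] at hi₀
    have hne : {i | 1 ≤ i ∧ i ≤ N ∧ C i = v}.Nonempty := ⟨i₀, hi₀.1, hi₀.2, hCi₀⟩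
    have hj := Nat.sInf_mem hne
    set j := sInf {i | 1 ≤ i ∧ i ≤ N ∧ C i = v} with hjdef
    obtain ⟨hj1, hjN, hjv⟩ := hj
    rcases Nat.eq_or_lt_of_le hj1 with h | h
    · simp [hT, ← h]
    · have hjm : j - 1 ∉ {i | 1 ≤ i ∧ i ≤ N ∧ C i = v} := by
        intro hmem'
        have := Nat.sInf_le hmem'
        omega
      have hCne : C (j - 1) ≠ C j := by
        intro heq
        exact hjm ⟨by omega, by omega, heq.trans hjv⟩
      have hj1' : (j - 1) + 1 = j := by omega
      have : P (j - 1) := hP _ (by omega) (by omega) (by rw [hj1']; exact hCne)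
      refine Finset.mem_union_right _ (Finset.mem_image.2 ⟨j - 1, ?_, hj1'⟩)
      exact Finset.mem_filter.2 ⟨Finset.mem_Icc.2 ⟨by omega, by omega⟩, this⟩
  have hinj : Set.InjOn (fun v => sInf {i | 1 ≤ i ∧ i ≤ N ∧ C i = v})
      ((Finset.Icc 1 N).image C) := by
    intro v hv w hw heq
    obtain ⟨i₀, hi₀, hCi₀⟩ := Finset.mem_image.1 hv
    obtain ⟨i₁, hi₁, hCi₁⟩ := Finset.mem_image.1 hw
    simp only [Finset.mem_Icc] at hi₀ hi₁
    have hj := Nat.sInf_mem (⟨i₀, hi₀.1, hi₀.2, hCi₀⟩ :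
      {i | 1 ≤ i ∧ i ≤ N ∧ C i = v}.Nonempty)
    have hj' := Nat.sInf_mem (⟨i₁, hi₁.1, hi₁.2, hCi₁⟩ :
      {i | 1 ≤ i ∧ i ≤ N ∧ C i = w}.Nonempty)
    rw [← hj.2.2, ← hj'.2.2]
    simp only at heq
    rw [heq]
  calc ((Finset.Icc 1 N).image C).card ≤ T.card := Finset.card_le_card_of_injOn _ hmem hinj
    _ ≤ 1 + ((Finset.Icc 1 (N - 1)).filter P).card := by
        refine (Finset.card_union_le _ _).trans ?_
        simp [Finset.card_image_le]

theorem block_structure_periods_divide (π : ℕ → ℕ) (N p q : ℕ)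
    (hcyc : IsCyclicOn π N)
    (hp : HasBlockStructure π N p) (hq : HasBlockStructure π N q)
    (hpq : p < q) : p ∣ q := by
  classical
  obtain ⟨hbij, x, hx, hcycx⟩ := hcyc
  obtain ⟨hp1, hpN, Bp, hBpmono, hBpsurj, τp, hτp⟩ := hp
  obtain ⟨hq1, hqN, Bq, hBqmono, hBqsurj, τq, hτq⟩ := hq
  have hN : 1 ≤ N := by omega
  set C : ℕ → Fin p × Fin q := fun i => (Bp i, Bq i) with hC
  set σ : Fin p × Fin q → Fin p × Fin q := Prod.map ⇑τp ⇑τq with hσ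
  set s₀ : Fin p × Fin q := C x with hs₀
  have hσcoe : σ = ⇑(τp.prodCongr τq) := by
    funext s
    simp [hσ, Equiv.prodCongr_apply]
  -- key orbit identity
  have key : ∀ m : ℕ, π^[m] x ∈ Finset.Icc 1 N ∧ C (π^[m] x) = σ^[m] s₀ := by
    intro m
    induction m with
    | zero => exact ⟨hx, rfl⟩
    | succ m ih =>
      obtain ⟨hmem, heq⟩ := ih
      have hmem' : π (π^[m] x) ∈ Finset.Icc 1 N := by
        have := hbij.mapsTo (by simpa [Set.mem_Icc] using Finset.mem_Icc.1 hmem)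
        simpa [Finset.mem_Icc] using this
      refine ⟨by rw [Function.iterate_succ_apply']; exact hmem', ?_⟩
      rw [Function.iterate_succ_apply', Function.iterate_succ_apply']
      have e1 := hτp _ hmem
      have e2 := hτq _ hmem
      calc C (π (π^[m] x)) = σ (C (π^[m] x)) := by
            simp only [hC, hσ, Prod.map]
            rw [e1, e2]
        _ = σ (σ^[m] s₀) := by rw [heq]
  -- iterate of product map
  have hprod : ∀ (m : ℕ) (s : Fin p × Fin q),
      σ^[m] s = ((⇑τp)^[m] s.1, (⇑τq)^[m] s.2) := by
    intro m s
    rw [hσ, Prod.map_iterate]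
    rfl
  -- s₀ is a periodic point of σ
  have hord : 0 < orderOf (τp.prodCongr τq) := orderOf_pos _
  have hper0 : Function.IsPeriodicPt σ (orderOf (τp.prodCongr τq)) s₀ := by
    show σ^[orderOf (τp.prodCongr τq)] s₀ = s₀
    rw [hσcoe, Equiv.Perm.iterate_eq_pow, pow_orderOf_eq_one]
    rfl
  set t := Function.minimalPeriod σ s₀ with htdef
  have htpos : 0 < t := hper0.minimalPeriod_pos hord
  have hpert : Function.IsPeriodicPt σ t s₀ := Function.isPeriodicPt_minimalPeriod σ s₀
  -- the image of C is the orbit of s₀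
  set S : Finset (Fin p × Fin q) := (Finset.Icc 1 N).image C with hS
  have hSorb : S = (Finset.range t).image (fun m => σ^[m] s₀) := by
    apply Finset.ext
    intro v
    constructor
    · intro hv
      obtain ⟨i, hi, hCi⟩ := Finset.mem_image.1 hv
      obtain ⟨m, hm⟩ := hcycx i hi
      have hkey := (key m).2
      rw [hm] at hkey
      refine Finset.mem_image.2 ⟨m % t, Finset.mem_range.2 (Nat.mod_lt _ htpos), ?_⟩
      rw [Function.iterate_mod_minimalPeriod_eq, ← hkey, hCi]
    · intro hv
      obtain ⟨m, _, hm⟩ := Finset.mem_image.1 hv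
      exact Finset.mem_image.2 ⟨π^[m] x, (key m).1, by rw [(key m).2, hm]⟩
  have hScard : S.card = t := by
    rw [hSorb]
    rw [Finset.card_image_of_injOn, Finset.card_range]
    intro a ha b hb hab
    exact Function.iterate_injOn_Iio_minimalPeriod
      (by simpa using Finset.mem_range.1 (Finset.mem_coe.1 ha))
      (by simpa using Finset.mem_range.1 (Finset.mem_coe.1 hb)) hab
  -- a cyclically-acting permutation: the minimal period of B x divides t and equals k
  have hdvd : ∀ (k : ℕ) (τ : Equiv.Perm (Fin k)) (B : ℕ → Fin k)
      (_ : ∀ j : Fin k, ∃ i ∈ Finset.Icc 1 N, B i = j)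
      (_ : ∀ m : ℕ, B (π^[m] x) = (⇑τ)^[m] (B x))
      (_ : (⇑τ)^[t] (B x) = B x), k ∣ t := by
    intro k τ B hsurj hcomp hper
    have hperO : Function.IsPeriodicPt ⇑τ (orderOf τ) (B x) := by
      show (⇑τ)^[orderOf τ] (B x) = B x
      rw [Equiv.Perm.iterate_eq_pow, pow_orderOf_eq_one]
      rfl
    set tk := Function.minimalPeriod ⇑τ (B x) with htk
    have htkpos : 0 < tk := hperO.minimalPeriod_pos (orderOf_pos τ)
    have htkdvd : tk ∣ t := Function.IsPeriodicPt.minimalPeriod_dvd hper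
    have huniv : (Finset.range tk).image (fun m => (⇑τ)^[m] (B x)) = Finset.univ := by
      apply Finset.eq_univ_of_forall
      intro b
      obtain ⟨i, hi, hBi⟩ := hsurj b
      obtain ⟨m, hm⟩ := hcycx i hi
      have hb : b = (⇑τ)^[m] (B x) := by rw [← hBi, ← hm, hcomp]
      refine Finset.mem_image.2 ⟨m % tk, Finset.mem_range.2 (Nat.mod_lt _ htkpos), ?_⟩
      rw [Function.iterate_mod_minimalPeriod_eq, ← hb]
    have hcard : tk = k := by
      have h1 : ((Finset.range tk).image (fun m => (⇑τ)^[m] (B x))).card = tk := by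
        rw [Finset.card_image_of_injOn, Finset.card_range]
        intro a ha b hb hab
        exact Function.iterate_injOn_Iio_minimalPeriod
          (by simpa using Finset.mem_range.1 (Finset.mem_coe.1 ha))
          (by simpa using Finset.mem_range.1 (Finset.mem_coe.1 hb)) hab
      rw [huniv] at h1
      simp at h1
      omega
    rwa [← hcard]
  have hpt : p ∣ t := by
    refine hdvd p τp Bp hBpsurj (fun m => ?_) ?_
    · have h := congrArg Prod.fst (key m).2
      simpa [hC, hprod, hs₀] using h
    · have h := congrArg Prod.fst hpert
      simpa [hprod, hs₀, hC] using h
  have hqt : q ∣ t := by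
    refine hdvd q τq Bq hBqsurj (fun m => ?_) ?_
    · have h := congrArg Prod.snd (key m).2
      simpa [hC, hprod, hs₀] using h
    · have h := congrArg Prod.snd hpert
      simpa [hprod, hs₀, hC] using h
  -- counting: t ≤ p + q - 1
  have hJp := jump_card hN Bp hBpmono
  have hJq := jump_card hN Bq hBqmono
  have hcount : S.card ≤ 1 + ((p - 1) + (q - 1)) := by
    have hle := image_card_le hN C
      (fun i => Bp i ≠ Bp (i + 1) ∨ Bq i ≠ Bq (i + 1))
      (fun i _ _ h => by
        by_contra hcon
        rw [not_or, not_not, not_not] at hcon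
        exact h (Prod.ext hcon.1 hcon.2))
    refine hle.trans ?_
    have hsub : (Finset.Icc 1 (N - 1)).filter
        (fun i => Bp i ≠ Bp (i + 1) ∨ Bq i ≠ Bq (i + 1)) ⊆
        ((Finset.Icc 1 (N - 1)).filter (fun i => Bp i ≠ Bp (i + 1))) ∪
        ((Finset.Icc 1 (N - 1)).filter (fun i => Bq i ≠ Bq (i + 1))) := by
      intro i hi
      simp only [Finset.mem_filter, Finset.mem_union] at hi ⊢
      tauto
    have := (Finset.card_le_card hsub).trans (Finset.card_union_le _ _)
    omega
  have htle : t ≤ p + q - 1 := by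
    rw [← hScard]
    omega
  -- conclude
  have hqlet : q ≤ t := Nat.le_of_dvd htpos hqt
  have ht2q : t < 2 * q := by omega
  have htq : t = q := Nat.eq_of_dvd_of_lt_two_mul (by omega) hqt ht2q
  rwa [htq] at hpt
end

section
/- For every nonempty ≫-tail A of positive integers (a set A such that m ∈ A and m ≫ n implies n ∈ A), there exists n ∈ A such that A = {n} ∪ {x : n ≫ x}, i.e., A has a ≫-greatest element. -/
def nbsRank (m : ℕ) : ℕ :=
  if m % 2 = 1 then 3 * (m / 2) - 1
  else if m % 4 = 0 then 3 * (m / 4) - 3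
  else 3 * (m / 4) - 2

/-- The nbs order: `4 ≫ 6 ≫ 3 ≫ 8 ≫ 10 ≫ 5 ≫ ⋯ ≫ 4n ≫ 4n+2 ≫ 2n+1 ≫ ⋯ ≫ 2 ≫ 1`
(strict order). -/
def nbs (m n : ℕ) : Prop :=
  (3 ≤ m ∧ 3 ≤ n ∧ nbsRank m < nbsRank n) ∨
  (3 ≤ m ∧ (n = 2 ∨ n = 1)) ∨ (m = 2 ∧ n = 1)

lemma nbsRank_inj {m n : ℕ} (hm : 3 ≤ m) (hn : 3 ≤ n)
    (h : nbsRank m = nbsRank n) : m = n := by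
  unfold nbsRank at h
  split_ifs at h <;> omega

theorem tail_has_greatest_element (A : Set ℕ)
    (hpos : ∀ m ∈ A, 0 < m) (hne : A.Nonempty)
    (htail : ∀ m ∈ A, ∀ n, nbs m n → n ∈ A) :
    ∃ n ∈ A, A = {n} ∪ {x | nbs n x} := by
  classical
  by_cases h3 : ∃ m ∈ A, 3 ≤ m
  · have hS : ∃ k, ∃ m ∈ A, 3 ≤ m ∧ nbsRank m = k := by
      obtain ⟨m, hm, hm3⟩ := h3
      exact ⟨nbsRank m, m, hm, hm3, rfl⟩
    obtain ⟨n, hnA, hn3, hnk⟩ := Nat.find_spec hS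
    have hmin : ∀ m ∈ A, 3 ≤ m → Nat.find hS ≤ nbsRank m := by
      intro m hm h3m
      exact Nat.find_min' hS ⟨m, hm, h3m, rfl⟩
    refine ⟨n, hnA, ?_⟩
    ext x
    constructor
    · intro hx
      by_cases hxn : x = n
      · exact Or.inl hxn
      · right
        show nbs n x
        by_cases hx3 : 3 ≤ x
        · have hle := hmin x hx hx3
          have hne' : nbsRank n ≠ nbsRank x := fun h => hxn (nbsRank_inj hx3 hn3 h.symm)
          exact Or.inl ⟨hn3, hx3, by omega⟩
        · have := hpos x hx
          exact Or.inr (Or.inl ⟨hn3, by omega⟩)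
    · rintro (hx | hx)
      · exact hx ▸ hnA
      · exact htail n hnA x hx
  · push_neg at h3
    by_cases h2 : 2 ∈ A
    · refine ⟨2, h2, ?_⟩
      ext x
      constructor
      · intro hx
        have h1 := hpos x hx
        have := h3 x hx
        interval_cases x
        · exact Or.inr (Or.inr (Or.inr ⟨rfl, rfl⟩))
        · exact Or.inl rfl
      · rintro (hx | hx)
        · exact hx ▸ h2
        · exact htail 2 h2 x hx
    · obtain ⟨m, hm⟩ := hne
      have hm1 : m = 1 := by
        have := hpos m hm; have := h3 m hm
        interval_cases m
        · rfl
        · exact absurd hm h2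
      refine ⟨1, hm1 ▸ hm, ?_⟩
      ext x
      constructor
      · intro hx
        have h1 := hpos x hx
        have := h3 x hx
        interval_cases x
        · exact Or.inl rfl
        · exact absurd hx h2
      · rintro (hx | hx)
        · exact hx ▸ (hm1 ▸ hm)
        · rcases hx with ⟨h, _⟩ | ⟨h, _⟩ | ⟨h, _⟩ <;> omega
end

section
/- The Štefan cyclic permutation σ of {1,...,2n+1} (n ≥ 1), defined by σ(1) = n+1, σ(i) = 2n+3−i for 2 ≤ i ≤ n+1, and σ(i) = 2n+2−i for n+2 ≤ i ≤ 2n+1, has no block structure: there is no partition of {1,...,2n+1} into k blocks of consecutive integers with 1 < k < 2n+1 permuted by σ. -/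
/-- The Stefan permutation of `{1,…,2n+1}`. -/
def stefan (n : ℕ) : ℕ → ℕ := fun i =>
  if i = 1 then n + 1
  else if i ≤ n + 1 then 2 * n + 3 - i
  else 2 * n + 2 - i

lemma stefan_mem (n : ℕ) (hn : 1 ≤ n) {i : ℕ} (h1 : 1 ≤ i) (h2 : i ≤ 2*n+1) :
    1 ≤ stefan n i ∧ stefan n i ≤ 2*n+1 := by
  simp only [stefan]; split_ifs <;> omega

lemma stefan_inj (n : ℕ) (hn : 1 ≤ n) {x y : ℕ} (hx1 : 1 ≤ x) (hx2 : x ≤ 2*n+1)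
    (hy1 : 1 ≤ y) (hy2 : y ≤ 2*n+1) (h : stefan n x = stefan n y) : x = y := by
  simp only [stefan] at h; split_ifs at h <;> omega

/-- Stefan permutations have no block structure. -/
theorem stefan_no_block_structure (n : ℕ) (hn : 1 ≤ n) :
    ¬ ∃ k, HasBlockStructure (stefan n) (2 * n + 1) k := by
  rintro ⟨k, hk1, hkN, B, hmono, hsurj, τ, hτ⟩
  have hmem : ∀ i, 1 ≤ i → i ≤ 2*n+1 → i ∈ Finset.Icc 1 (2*n+1) :=
    fun i h1 h2 => Finset.mem_Icc.mpr ⟨h1, h2⟩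
  have hs1 : stefan n 1 = n + 1 := by simp only [stefan]; split_ifs <;> omega
  have hs2 : stefan n 2 = 2*n+1 := by simp only [stefan]; split_ifs <;> omega
  have hsn1 : stefan n (n+1) = n+2 := by simp only [stefan]; split_ifs <;> omega
  have hsN : stefan n (2*n+1) = 1 := by simp only [stefan]; split_ifs <;> omega
  have hmono' : ∀ x y, 1 ≤ x → x ≤ y → y ≤ 2*n+1 → B x ≤ B y := fun x y h1 h2 h3 =>
    hmono ⟨h1, by omega⟩ ⟨by omega, h3⟩ h2
  by_cases h12 : B 1 = B 2
  · -- Case A : 1 and 2 in the same block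
    have e1 : B (n+1) = τ (B 1) := by
      have := hτ 1 (hmem 1 (by omega) (by omega)); rwa [hs1] at this
    have e2 : B (2*n+1) = τ (B 2) := by
      have := hτ 2 (hmem 2 (by omega) (by omega)); rwa [hs2] at this
    have e3 : B (n+2) = τ (B (n+1)) := by
      have := hτ (n+1) (hmem (n+1) (by omega) (by omega)); rwa [hsn1] at this
    have e4 : B 1 = τ (B (2*n+1)) := by
      have := hτ (2*n+1) (hmem (2*n+1) (by omega) (by omega)); rwa [hsN] at this
    have hAB : B (n+1) = B (2*n+1) := by rw [e1, e2, h12]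
    have hn2 : B (n+2) = B (n+1) := by
      refine le_antisymm ?_ (hmono' (n+1) (n+2) (by omega) (by omega) (by omega))
      have := hmono' (n+2) (2*n+1) (by omega) (by omega) (by omega)
      rwa [← hAB] at this
    have hfix : τ (B (n+1)) = B (n+1) := by rw [← e3, hn2]
    have hB1 : B 1 = B (n+1) := by rw [e4, ← hAB, hfix]
    have hconst : ∀ i, 1 ≤ i → i ≤ 2*n+1 → B i = B 1 := by
      intro i h1 h2
      refine le_antisymm ?_ (hmono' 1 i le_rfl h1 h2)
      have := hmono' i (2*n+1) h1 h2 le_rfl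
      rwa [← hAB, ← hB1] at this
    obtain ⟨i0, hi0, hBi0⟩ := hsurj ⟨0, by omega⟩
    obtain ⟨i1, hi1, hBi1⟩ := hsurj ⟨1, by omega⟩
    rw [Finset.mem_Icc] at hi0 hi1
    have : (⟨0, by omega⟩ : Fin k) = ⟨1, by omega⟩ := by
      rw [← hBi0, ← hBi1, hconst i0 hi0.1 hi0.2, hconst i1 hi1.1 hi1.2]
    exact absurd (congrArg Fin.val this) (by norm_num)
  · -- Case B : all blocks are singletons
    have h12' : B 1 < B 2 :=
      lt_of_le_of_ne (hmono' 1 2 le_rfl (by omega) (by omega)) h12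
    have sing1 : ∀ y, 1 ≤ y → y ≤ 2*n+1 → B y = B 1 → y = 1 := by
      intro y h1 h2 hB
      by_contra hne
      have h2y : B 2 ≤ B y := hmono' 2 y (by omega) (by omega) h2
      rw [hB] at h2y
      exact absurd h2y (not_le.mpr h12')
    have step : ∀ x, 1 ≤ x → x ≤ 2*n+1 →
        (∀ y, 1 ≤ y → y ≤ 2*n+1 → B y = B (stefan n x) → y = stefan n x) →
        (∀ y, 1 ≤ y → y ≤ 2*n+1 → B y = B x → y = x) := by
      intro x hx1 hx2 hsing y hy1 hy2 hB
      have h1 : B (stefan n y) = τ (B y) := hτ y (hmem y hy1 hy2)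
      have h2 : B (stefan n x) = τ (B x) := hτ x (hmem x hx1 hx2)
      have h3 : B (stefan n y) = B (stefan n x) := by rw [h1, h2, hB]
      obtain ⟨hm1, hm2⟩ := stefan_mem n hn hy1 hy2
      exact stefan_inj n hn hy1 hy2 hx1 hx2 (hsing _ hm1 hm2 h3)
    have main : ∀ t, t ≤ n →
        (∀ y, 1 ≤ y → y ≤ 2*n+1 → B y = B (t+1) → y = t+1) ∧
        (∀ y, 1 ≤ y → y ≤ 2*n+1 → B y = B (2*n+1-t) → y = 2*n+1-t) := by
      intro t
      induction t with
      | zero =>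
        intro _
        refine ⟨sing1, ?_⟩
        have := step (2*n+1) (by omega) (by omega)
        rw [hsN] at this
        simpa using this sing1
      | succ m ih =>
        intro hm
        obtain ⟨ihA, ihB⟩ := ih (by omega)
        have hA : ∀ y, 1 ≤ y → y ≤ 2*n+1 → B y = B (m+2) → y = m+2 := by
          have hv : stefan n (m+2) = 2*n+1-m := by
            simp only [stefan]; split_ifs <;> omega
          have := step (m+2) (by omega) (by omega)
          rw [hv] at this
          exact this ihB
        refine ⟨by simpa using hA, ?_⟩
        by_cases hc : m + 1 ≤ n - 1
        · have hv : stefan n (2*n+1-(m+1)) = m+2 := by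
            simp only [stefan]; split_ifs <;> omega
          have := step (2*n+1-(m+1)) (by omega) (by omega)
          rw [hv] at this
          exact this hA
        · -- m + 1 = n, so 2n+1-(m+1) = n+1, stefan (n+1) = n+2 = 2n+1-m
          have hmn : m + 1 = n := by omega
          have hv : stefan n (2*n+1-(m+1)) = 2*n+1-m := by
            simp only [stefan]; split_ifs <;> omega
          have := step (2*n+1-(m+1)) (by omega) (by omega)
          rw [hv] at this
          exact this ihB
    have cover : ∀ x, 1 ≤ x → x ≤ 2*n+1 →
        ∀ y, 1 ≤ y → y ≤ 2*n+1 → B y = B x → y = x := by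
      intro x hx1 hx2
      by_cases hx : x ≤ n+1
      · have := (main (x-1) (by omega)).1
        rwa [show x-1+1 = x by omega] at this
      · have := (main (2*n+1-x) (by omega)).2
        rwa [show 2*n+1-(2*n+1-x) = x by omega] at this
    have hinj : Set.InjOn B ↑(Finset.Icc 1 (2*n+1)) := by
      intro x hx y hy hxy
      simp only [Finset.coe_Icc, Set.mem_Icc] at hx hy
      exact cover y hy.1 hy.2 x hx.1 hx.2 hxy
    have hcard := Finset.card_le_card_of_injOn B
      (fun a _ => Finset.mem_univ (B a)) hinj
    simp only [Nat.card_Icc, Finset.card_univ, Fintype.card_fin] at hcard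
    omega
end

section
/- Let σ be the Štefan permutation of {1,...,2n+1}, and let f be the corresponding P-linear map on [1, 2n+1] for P = {1,...,2n+1}. Then for the central interval I = [n+1, n+2], the image f^j(I) contains exactly j+2 points of P for 0 ≤ j ≤ 2n−1; in particular f^{2n−1}(I) = [1, 2n+1]. -/
lemma stefan_strict (n i : ℕ) (h2 : 2 ≤ i) (h : i ≤ 2 * n) :
    stefan n (i + 1) < stefan n i := by
  unfold stefan; split_ifs <;> omega

lemma stefan_anti (n a b : ℕ) (h2 : 2 ≤ a) (hab : a ≤ b) (hb : b ≤ 2 * n + 1) :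
    stefan n b ≤ stefan n a := by
  unfold stefan; split_ifs <;> omega

lemma affine_image (f : ℝ → ℝ) (c p q : ℝ) (hpq : q < p)
    (hf : ∀ x ∈ Set.Icc c (c + 1), f x = p + (x - c) * (q - p)) :
    f '' Set.Icc c (c + 1) = Set.Icc q p := by
  ext y
  constructor
  · rintro ⟨x, hx, rfl⟩
    rw [hf x hx]
    obtain ⟨h1, h2⟩ := hx
    constructor <;> nlinarith
  · rintro ⟨hy1, hy2⟩
    have h0 : 0 ≤ (p - y) / (p - q) := div_nonneg (by linarith) (by linarith)
    have h1 : (p - y) / (p - q) ≤ 1 := by rw [div_le_one (by linarith)]; linarith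
    refine ⟨c + (p - y) / (p - q), ⟨by linarith, by linarith⟩, ?_⟩
    rw [hf _ ⟨by linarith, by linarith⟩]
    have hne : p - q ≠ 0 := by linarith
    field_simp
    ring

lemma piece_image (n : ℕ) (f : ℝ → ℝ)
    (hvals : ∀ i ∈ Finset.Icc 1 (2 * n + 1), f (i : ℝ) = (stefan n i : ℝ))
    (haff : ∀ i ∈ Finset.Icc 1 (2 * n), ∀ x ∈ Set.Icc (i : ℝ) ((i : ℝ) + 1),
      f x = f (i : ℝ) + (x - (i : ℝ)) * (f ((i : ℝ) + 1) - f (i : ℝ)))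
    (i : ℕ) (h2 : 2 ≤ i) (hi : i ≤ 2 * n) :
    f '' Set.Icc (i : ℝ) ((i : ℝ) + 1)
      = Set.Icc (stefan n (i + 1) : ℝ) (stefan n i : ℝ) := by
  have hmem : i ∈ Finset.Icc 1 (2 * n) := by simp; omega
  have hv1 : f (i : ℝ) = (stefan n i : ℝ) := hvals i (by simp; omega)
  have hv2 : f ((i : ℝ) + 1) = (stefan n (i + 1) : ℝ) := by
    have := hvals (i + 1) (by simp; omega)
    push_cast at this ⊢; exact this
  apply affine_image
  · exact_mod_cast stefan_strict n i h2 hi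
  · intro x hx
    rw [haff i hmem x hx, hv1, hv2]

lemma chain_image (n : ℕ) (f : ℝ → ℝ)
    (hvals : ∀ i ∈ Finset.Icc 1 (2 * n + 1), f (i : ℝ) = (stefan n i : ℝ))
    (haff : ∀ i ∈ Finset.Icc 1 (2 * n), ∀ x ∈ Set.Icc (i : ℝ) ((i : ℝ) + 1),
      f x = f (i : ℝ) + (x - (i : ℝ)) * (f ((i : ℝ) + 1) - f (i : ℝ))) :
    ∀ b a : ℕ, 2 ≤ a → a < b → b ≤ 2 * n + 1 →
      f '' Set.Icc (a : ℝ) (b : ℝ)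
        = Set.Icc (stefan n b : ℝ) (stefan n a : ℝ) := by
  intro b
  induction b with
  | zero => omega
  | succ b ih =>
    intro a h2 hab hb
    rcases eq_or_lt_of_le (Nat.lt_succ_iff.mp hab) with rfl | hlt
    · have := piece_image n f hvals haff a h2 (by omega)
      rw [show ((a + 1 : ℕ) : ℝ) = (a : ℝ) + 1 by push_cast; ring]
      exact this
    · have hsplit : Set.Icc (a : ℝ) ((b : ℕ) + 1 : ℕ) =
          Set.Icc (a : ℝ) (b : ℝ) ∪ Set.Icc (b : ℝ) ((b : ℝ) + 1) := by
        rw [Set.Icc_union_Icc_eq_Icc (by exact_mod_cast hlt.le) (by linarith)]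
        push_cast; ring_nf
      rw [hsplit, Set.image_union, ih a h2 hlt (by omega),
        piece_image n f hvals haff b (by omega) (by omega),
        Set.union_comm,
        Set.Icc_union_Icc_eq_Icc
          (by exact_mod_cast (stefan_strict n b (by omega) (by omega)).le)
          (by exact_mod_cast stefan_anti n a b h2 hlt.le (by omega))]

lemma ncard_lattice (n a b : ℕ) (h1 : 1 ≤ a) (hab : a ≤ b) (hb : b ≤ 2 * n + 1) :
    (((fun i : ℕ => (i : ℝ)) '' (Set.Icc 1 (2 * n + 1))) ∩
      Set.Icc (a : ℝ) (b : ℝ)).ncard = b - a + 1 := by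
  have heq : ((fun i : ℕ => (i : ℝ)) '' (Set.Icc 1 (2 * n + 1))) ∩ Set.Icc (a : ℝ) (b : ℝ)
      = (fun i : ℕ => (i : ℝ)) '' (Set.Icc a b) := by
    ext x
    constructor
    · rintro ⟨⟨m, _, rfl⟩, hx⟩
      exact ⟨m, ⟨(Nat.cast_le (α := ℝ)).mp (by simpa using hx.1),
        (Nat.cast_le (α := ℝ)).mp (by simpa using hx.2)⟩, rfl⟩
    · rintro ⟨m, ⟨hm1, hm2⟩, rfl⟩
      exact ⟨⟨m, ⟨by omega, by omega⟩, rfl⟩,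
        ⟨by simpa using (Nat.cast_le (α := ℝ)).mpr hm1,
         by simpa using (Nat.cast_le (α := ℝ)).mpr hm2⟩⟩
  rw [heq, Set.ncard_image_of_injective _ (fun x y h => by exact_mod_cast h),
    ← Finset.coe_Icc, Set.ncard_coe_finset, Nat.card_Icc]
  omega

/-- For the `P`-linear map `f` of the Stefan permutation on `[1, 2n+1]` and the
central interval `I = [n+1, n+2]`, the image `f^[j] I` contains exactly `j+2`
points of `P = {1,…,2n+1}` for `0 ≤ j ≤ 2n-1`; in particular
`f^[2n-1] I = [1, 2n+1]`. -/
theorem stefan_central_interval_growth (n : ℕ) (hn : 1 ≤ n) (f : ℝ → ℝ)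
    (hvals : ∀ i ∈ Finset.Icc 1 (2 * n + 1), f (i : ℝ) = (stefan n i : ℝ))
    (haff : ∀ i ∈ Finset.Icc 1 (2 * n), ∀ x ∈ Set.Icc (i : ℝ) ((i : ℝ) + 1),
      f x = f (i : ℝ) + (x - (i : ℝ)) * (f ((i : ℝ) + 1) - f (i : ℝ))) :
    (∀ j ≤ 2 * n - 1,
      (((fun i : ℕ => (i : ℝ)) '' (Set.Icc 1 (2 * n + 1))) ∩
        f^[j] '' Set.Icc ((n : ℝ) + 1) ((n : ℝ) + 2)).ncard = j + 2) ∧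
    f^[2 * n - 1] '' Set.Icc ((n : ℝ) + 1) ((n : ℝ) + 2) =
      Set.Icc (1 : ℝ) (2 * (n : ℝ) + 1) := by
  have key : ∀ j ≤ 2 * n - 1, f^[j] '' Set.Icc ((n : ℝ) + 1) ((n : ℝ) + 2)
      = Set.Icc ((n + 1 - (j + 1) / 2 : ℕ) : ℝ) ((n + 2 + j / 2 : ℕ) : ℝ) := by
    intro j
    induction j with
    | zero =>
      intro _
      simp only [Function.iterate_zero, Set.image_id]
      norm_num
    | succ j ih =>
      intro hj
      have hj' : j ≤ 2 * n - 1 := by omega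
      rw [Function.iterate_succ', Set.image_comp, ih hj',
        chain_image n f hvals haff _ _ (by omega) (by omega) (by omega)]
      have e1 : stefan n (n + 2 + j / 2) = n + 1 - (j + 1 + 1) / 2 := by
        unfold stefan; split_ifs <;> omega
      have e2 : stefan n (n + 1 - (j + 1) / 2) = n + 2 + (j + 1) / 2 := by
        unfold stefan; split_ifs <;> omega
      rw [e1, e2]
  constructor
  · intro j hj
    rw [key j hj, ncard_lattice n _ _ (by omega) (by omega) (by omega)]
    omega
  · rw [key (2 * n - 1) le_rfl,
      show n + 1 - (2 * n - 1 + 1) / 2 = 1 by omega,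
      show n + 2 + (2 * n - 1) / 2 = 2 * n + 1 by omega]
    norm_num
end

section
/- Suppose f is a continuous interval map with a Štefan cycle Q = {q_1 < ... < q_{2n+1}} of period s = 2n+1 > 3 (so f acts on Q by the Štefan permutation), and let I be the central Q-basic interval [q_{n+1}, q_{n+2}]. If f^{s−3}(I) ⊇ Q, then f has a periodic point of odd period greater than 1 and less than s. -/
/-- Covering lemma: if `g u = p < r = g v` with `u ≤ v`, there is a subinterval
`[a,b] ⊆ [u,v]` with `g a = p`, `g b = r`, and `g` mapping `[a,b]` into `[p,r]`. -/
lemma cov (g : ℝ → ℝ) (hg : Continuous g) {u v p r : ℝ} (huv : u ≤ v)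
    (hu : g u = p) (hv : g v = r) (hpr : p < r) :
    ∃ a b, u ≤ a ∧ a ≤ b ∧ b ≤ v ∧ g a = p ∧ g b = r ∧
      Set.MapsTo g (Set.Icc a b) (Set.Icc p r) := by
  set S : Set ℝ := Set.Icc u v ∩ g ⁻¹' {r} with hS
  have hSc : IsClosed S := isClosed_Icc.inter (isClosed_singleton.preimage hg)
  have hvS : v ∈ S := ⟨⟨huv, le_refl v⟩, hv⟩
  have hSbdd : BddBelow S := ⟨u, fun x hx => hx.1.1⟩
  set b := sInf S with hbdef
  have hbS : b ∈ S := hSc.csInf_mem ⟨v, hvS⟩ hSbdd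
  have hub : u ≤ b := hbS.1.1
  have hbv : b ≤ v := hbS.1.2
  have hgb : g b = r := hbS.2
  have key1 : ∀ x, u ≤ x → x < b → g x < r := by
    intro x hux hxb
    by_contra hcon
    push_neg at hcon
    have : r ∈ Set.Icc (g u) (g x) := ⟨by rw [hu]; exact hpr.le, hcon⟩
    obtain ⟨y, hy, hgy⟩ := intermediate_value_Icc hux hg.continuousOn this
    have hyS : y ∈ S := ⟨⟨hy.1, le_trans hy.2 (le_trans hxb.le hbv)⟩, hgy⟩
    have := csInf_le hSbdd hyS
    linarith [hy.2]
  set T : Set ℝ := Set.Icc u b ∩ g ⁻¹' {p} with hT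
  have hTc : IsClosed T := isClosed_Icc.inter (isClosed_singleton.preimage hg)
  have huT : u ∈ T := ⟨⟨le_refl u, hub⟩, hu⟩
  have hTbdd : BddAbove T := ⟨b, fun x hx => hx.1.2⟩
  set a := sSup T with hadef
  have haT : a ∈ T := hTc.csSup_mem ⟨u, huT⟩ hTbdd
  have hua : u ≤ a := haT.1.1
  have hab : a ≤ b := haT.1.2
  have hga : g a = p := haT.2
  have key2 : ∀ x, a < x → x ≤ b → p < g x := by
    intro x hax hxb
    by_contra hcon
    push_neg at hcon
    have : p ∈ Set.Icc (g x) (g b) := ⟨hcon, by rw [hgb]; exact hpr.le⟩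
    obtain ⟨y, hy, hgy⟩ := intermediate_value_Icc hxb hg.continuousOn this
    have hyT : y ∈ T := ⟨⟨le_trans hua (le_trans hax.le hy.1), hy.2⟩, hgy⟩
    have := le_csSup hTbdd hyT
    linarith [hy.1]
  refine ⟨a, b, hua, hab, hbv, hga, hgb, ?_⟩
  intro x hx
  constructor
  · rcases eq_or_lt_of_le hx.1 with h | h
    · rw [← h, hga]
    · exact (key2 x h hx.2).le
  · rcases eq_or_lt_of_le hx.2 with h | h
    · rw [h, hgb]
    · exact (key1 x (le_trans hua hx.1) h).le

/-- Mirrored version of `cov`. -/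
lemma cov' (g : ℝ → ℝ) (hg : Continuous g) {u v p r : ℝ} (hvu : v ≤ u)
    (hu : g u = p) (hv : g v = r) (hpr : p < r) :
    ∃ a b, v ≤ a ∧ a ≤ b ∧ b ≤ u ∧ g b = p ∧ g a = r ∧
      Set.MapsTo g (Set.Icc a b) (Set.Icc p r) := by
  obtain ⟨a0, b0, h1, h2, h3, h4, h5, h6⟩ :=
    cov (fun x => g (-x)) (hg.comp continuous_neg) (u := -u) (v := -v)
      (by linarith) (by simpa using hu) (by simpa using hv) hpr
  refine ⟨-b0, -a0, by linarith, by linarith, by linarith,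
    by simpa using h4, by simpa using h5, ?_⟩
  intro x hx
  have : -x ∈ Set.Icc a0 b0 := ⟨by linarith [hx.2], by linarith [hx.1]⟩
  simpa using h6 this


/-- If `f` is a continuous interval map with a Stefan cycle `Q` of period
`s = 2n+1 > 3` whose central basic interval `I` satisfies `f^[s-3] I ⊇ Q`, then
`f` has a periodic point of odd period strictly between `1` and `s`. -/
theorem stefan_central_covering_gives_smaller_odd_period
    (n : ℕ) (hn : 2 ≤ n) (f : ℝ → ℝ) (hf : Continuous f)
    (q : ℕ → ℝ) (hmono : StrictMonoOn q (Set.Icc 1 (2 * n + 1)))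
    (hq : ∀ i ∈ Finset.Icc 1 (2 * n + 1), f (q i) = q (stefan n i))
    (hcover : q '' (Set.Icc 1 (2 * n + 1)) ⊆
      f^[2 * n + 1 - 3] '' Set.Icc (q (n + 1)) (q (n + 2))) :
    ∃ x : ℝ, Odd (Function.minimalPeriod f x) ∧
      1 < Function.minimalPeriod f x ∧ Function.minimalPeriod f x < 2 * n + 1 := by
  -- index membership facts
  have mem : ∀ i : ℕ, 1 ≤ i → i ≤ 2 * n + 1 → i ∈ Set.Icc 1 (2 * n + 1) := by
    intro i h1 h2; exact ⟨h1, h2⟩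
  have hq1 : f (q 1) = q (n + 1) := by
    have := hq 1 (by simp [Finset.mem_Icc])
    simpa [stefan] using this
  have hq2 : f (q 2) = q (2 * n + 1) := by
    have := hq 2 (by simp [Finset.mem_Icc]; omega)
    have h2 : stefan n 2 = 2 * n + 1 := by
      simp only [stefan]
      rw [if_neg (by omega), if_pos (by omega)]
      omega
    rw [h2] at this; exact this
  have hq12 : q 1 < q 2 := hmono (mem 1 (by omega) (by omega)) (mem 2 (by omega) (by omega)) (by omega)
  set g : ℝ → ℝ := f^[2 * n - 2] with hgdef
  have hgc : Continuous g := hf.iterate _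
  have hidx : 2 * n + 1 - 3 = 2 * n - 2 := by omega
  rw [hidx] at hcover
  -- get preimages of q 1 and q 2 in I
  obtain ⟨u, hu, hgu⟩ := hcover ⟨1, mem 1 le_rfl (by omega), rfl⟩
  obtain ⟨v, hv, hgv⟩ := hcover ⟨2, mem 2 (by omega) (by omega), rfl⟩
  -- produce the subinterval K = [a,b]
  obtain ⟨a, b, hIa, hab, hbI, hx1, hx2, hmap⟩ :
      ∃ a b, q (n + 1) ≤ a ∧ a ≤ b ∧ b ≤ q (n + 2) ∧
        (∃ x ∈ Set.Icc a b, g x = q 1) ∧ (∃ x ∈ Set.Icc a b, g x = q 2) ∧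
        Set.MapsTo g (Set.Icc a b) (Set.Icc (q 1) (q 2)) := by
    rcases le_total u v with h | h
    · obtain ⟨a, b, h1, h2, h3, h4, h5, h6⟩ := cov g hgc h hgu hgv hq12
      exact ⟨a, b, le_trans hu.1 h1, h2, le_trans h3 hv.2,
        ⟨a, ⟨le_refl a, h2⟩, h4⟩, ⟨b, ⟨h2, le_refl b⟩, h5⟩, h6⟩
    · obtain ⟨a, b, h1, h2, h3, h4, h5, h6⟩ := cov' g hgc h hgu hgv hq12
      exact ⟨a, b, le_trans hv.1 h1, h2, le_trans h3 hu.2,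
        ⟨b, ⟨h2, le_refl b⟩, h4⟩, ⟨a, ⟨le_refl a, h2⟩, h5⟩, h6⟩
  set h : ℝ → ℝ := f^[2 * n - 1] with hhdef
  have hhc : Continuous h := hf.iterate _
  have hhg : ∀ x, h x = f (g x) := by
    intro x
    have : 2 * n - 1 = (2 * n - 2) + 1 := by omega
    rw [hhdef, this, Function.iterate_succ_apply']
  -- h '' [a,b] contains [q (n+1), q (2n+1)]
  have himg : Set.Icc (q (n + 1)) (q (2 * n + 1)) ⊆ h '' Set.Icc a b := by
    have hconn : IsPreconnected (h '' Set.Icc a b) :=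
      isPreconnected_Icc.image h hhc.continuousOn
    obtain ⟨x1, hx1m, hx1e⟩ := hx1
    obtain ⟨x2, hx2m, hx2e⟩ := hx2
    have e1 : h x1 = q (n + 1) := by rw [hhg, hx1e, hq1]
    have e2 : h x2 = q (2 * n + 1) := by rw [hhg, hx2e, hq2]
    exact hconn.Icc_subset ⟨x1, hx1m, e1⟩ ⟨x2, hx2m, e2⟩
  have hKsub : Set.Icc a b ⊆ Set.Icc (q (n + 1)) (q (2 * n + 1)) := by
    have : q (n + 2) ≤ q (2 * n + 1) :=
      (hmono (mem (n + 2) (by omega) (by omega)) (mem (2 * n + 1) (by omega) (by omega)) (by omega)).le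
    intro x hx
    exact ⟨le_trans hIa hx.1, le_trans hx.2 (le_trans hbI this)⟩
  -- fixed point of h in [a,b]
  obtain ⟨x, hxK, hfix⟩ : ∃ x ∈ Set.Icc a b, h x = x := by
    obtain ⟨u1, hu1, he1⟩ := himg (hKsub ⟨le_refl a, hab⟩)
    obtain ⟨u2, hu2, he2⟩ := himg (hKsub ⟨hab, le_refl b⟩)
    have hc : Continuous (fun x => h x - x) := hhc.sub continuous_id
    have h0 : (0 : ℝ) ∈ Set.uIcc (h u1 - u1) (h u2 - u2) := by
      rw [Set.mem_uIcc]
      left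
      constructor <;> [linarith [hu1.1, he1]; linarith [hu2.2, he2]]
    obtain ⟨x, hx, hx0⟩ := intermediate_value_uIcc hc.continuousOn h0
    have hxab : x ∈ Set.Icc a b := by
      rcases le_total u1 u2 with hle | hle
      · rw [Set.uIcc_of_le hle] at hx
        exact ⟨le_trans hu1.1 hx.1, le_trans hx.2 hu2.2⟩
      · rw [Set.uIcc_of_ge hle] at hx
        exact ⟨le_trans hu2.1 hx.1, le_trans hx.2 hu1.2⟩
    exact ⟨x, hxab, by linarith [hx0, sub_eq_zero.mp hx0] ⟩
  have hper : Function.IsPeriodicPt f (2 * n - 1) x := hfix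
  set m := Function.minimalPeriod f x with hm
  have hdvd : m ∣ 2 * n - 1 := hper.minimalPeriod_dvd
  have hpos : 0 < m := hper.minimalPeriod_pos (by omega)
  have hmle : m ≤ 2 * n - 1 := Nat.le_of_dvd (by omega) hdvd
  have hodd : Odd m := by
    rcases Nat.even_or_odd m with he | ho
    · exfalso
      obtain ⟨k, hk⟩ := dvd_trans he.two_dvd hdvd
      omega
    · exact ho
  have hne1 : m ≠ 1 := by
    intro h1
    have hfx : f x = x := by
      have := Function.isPeriodicPt_minimalPeriod f x
      rw [← hm, h1] at this
      exact this
    have hgx : g x = x := Function.iterate_fixed hfx _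
    have hxq2 : x ≤ q 2 := by
      have := hmap hxK
      rw [hgx] at this
      exact this.2
    have hq2lt : q 2 < q (n + 1) :=
      hmono (mem 2 (by omega) (by omega)) (mem (n + 1) (by omega) (by omega)) (by omega)
    have : q (n + 1) ≤ x := le_trans hIa hxK.1
    linarith
  exact ⟨x, hodd, by omega, by omega⟩
end

section
/- If a continuous interval map f is such that f^n has a horseshoe (two closed intervals I, J with disjoint interiors satisfying f^n(I) ∩ f^n(J) ⊇ I ∪ J), then for every m ≥ 1, f^n has a periodic point of period m; in particular f has a periodic point of period 3 under f^n. -/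
open Set Function

/-- Oriented covering lemma: if `g α = p`, `g β = q` with `α ≤ β`, `p < q`, then some
closed subinterval of `[α, β]` maps exactly onto `[p, q]`. -/
lemma cover_oriented {g : ℝ → ℝ} (hg : Continuous g) {α β p q : ℝ}
    (hαβ : α ≤ β) (hgα : g α = p) (hgβ : g β = q) (hpq : p < q) :
    ∃ s t, α ≤ s ∧ s ≤ t ∧ t ≤ β ∧ g '' Icc s t = Icc p q := by
  classical
  set T : Set ℝ := Icc α β ∩ g ⁻¹' {q} with hTdef
  have hTc : IsCompact T := isCompact_Icc.inter_right (isClosed_singleton.preimage hg)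
  have hTne : T.Nonempty := ⟨β, ⟨hαβ, le_refl β⟩, by simp [hgβ]⟩
  have ht0 := hTc.sInf_mem hTne
  set t0 := sInf T with ht0def
  have ht0I : t0 ∈ Icc α β := ht0.1
  have hgt0 : g t0 = q := ht0.2
  have ht0min : ∀ z ∈ T, t0 ≤ z := fun z hz => csInf_le hTc.bddBelow hz
  set S : Set ℝ := Icc α t0 ∩ g ⁻¹' {p} with hSdef
  have hSc : IsCompact S := isCompact_Icc.inter_right (isClosed_singleton.preimage hg)
  have hSne : S.Nonempty := ⟨α, ⟨le_refl α, ht0I.1⟩, by simp [hgα]⟩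
  have hs := hSc.sSup_mem hSne
  set s := sSup S with hsdef
  have hsI : s ∈ Icc α t0 := hs.1
  have hgs : g s = p := hs.2
  have hsmax : ∀ z ∈ S, z ≤ s := fun z hz => le_csSup hSc.bddAbove hz
  refine ⟨s, t0, hsI.1, hsI.2, ht0I.2, ?_⟩
  apply Subset.antisymm
  · rintro y ⟨z, hz, rfl⟩
    constructor
    · by_contra hlt
      push_neg at hlt
      obtain ⟨w, hw, hgw⟩ := intermediate_value_Icc hz.2 hg.continuousOn
        (show p ∈ Icc (g z) (g t0) from ⟨hlt.le, by rw [hgt0]; exact hpq.le⟩)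
      have hzs : s < z := by
        rcases eq_or_lt_of_le hz.1 with h | h
        · exfalso; rw [← h, hgs] at hlt; exact lt_irrefl _ hlt
        · exact h
      have hws : w ≤ s := hsmax w ⟨⟨le_trans hsI.1 (le_trans hz.1 hw.1), hw.2⟩, hgw⟩
      have : z ≤ w := hw.1
      linarith
    · by_contra hlt
      push_neg at hlt
      obtain ⟨w, hw, hgw⟩ := intermediate_value_Icc hz.1 hg.continuousOn
        (show q ∈ Icc (g s) (g z) from ⟨by rw [hgs]; exact hpq.le, hlt.le⟩)
      have hwT : t0 ≤ w := ht0min w ⟨⟨le_trans hsI.1 hw.1, le_trans hw.2 (le_trans hz.2 ht0I.2)⟩, hgw⟩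
      have hweq : w = t0 := le_antisymm (le_trans hw.2 hz.2) hwT
      have hz2 : z = t0 := le_antisymm hz.2 (hweq ▸ hw.2)
      rw [hz2, hgt0] at hlt
      exact lt_irrefl _ hlt
  · have h := intermediate_value_Icc hsI.2 hg.continuousOn
    rw [hgs, hgt0] at h
    exact h

/-- Covering lemma: if `[p,q] ⊆ g([u,v])` then some closed subinterval of `[u,v]`
maps exactly onto `[p,q]`. -/
lemma cover {g : ℝ → ℝ} (hg : Continuous g) {u v p q : ℝ} (hpq : p ≤ q)
    (h : Icc p q ⊆ g '' Icc u v) :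
    ∃ s t, u ≤ s ∧ s ≤ t ∧ t ≤ v ∧ g '' Icc s t = Icc p q := by
  obtain ⟨α, hα, hgα⟩ := h (left_mem_Icc.2 hpq)
  obtain ⟨β, hβ, hgβ⟩ := h (right_mem_Icc.2 hpq)
  rcases eq_or_lt_of_le hpq with heq | hlt
  · refine ⟨α, α, hα.1, le_refl α, hα.2, ?_⟩
    rw [Icc_self, image_singleton, hgα, heq, Icc_self]
  rcases le_total α β with hle | hle
  · obtain ⟨s, t, h1, h2, h3, h4⟩ := cover_oriented hg hle hgα hgβ hlt
    exact ⟨s, t, le_trans hα.1 h1, h2, le_trans h3 hβ.2, h4⟩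
  · set g' : ℝ → ℝ := fun x => g (α + β - x) with hg'def
    have hg'c : Continuous g' := hg.comp (continuous_const.sub continuous_id)
    have h1 : g' β = p := by simp [hg'def, hgα]
    have h2 : g' α = q := by simp [hg'def, hgβ]
    obtain ⟨s, t, hs1, hst, ht1, himg⟩ := cover_oriented hg'c hle h1 h2 hlt
    refine ⟨α + β - t, α + β - s, ?_, by linarith, ?_, ?_⟩
    · have := hβ.1; linarith
    · have := hα.2; linarith
    · have : Icc (α + β - t) (α + β - s) = (fun x => α + β - x) '' Icc s t := by
        rw [Set.image_const_sub_Icc]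
      rw [this, ← Set.image_comp, ← himg]
      rfl

/-- Itinerary lemma: a cyclic chain of coverings yields a periodic point following it. -/
lemma itinerary (g : ℝ → ℝ) (hg : Continuous g) (m : ℕ) (lo up : ℕ → ℝ)
    (hle : ∀ i, lo i ≤ up i)
    (hend1 : lo m = lo 0) (hend2 : up m = up 0)
    (hcov : ∀ i, i < m → Icc (lo (i+1)) (up (i+1)) ⊆ g '' Icc (lo i) (up i)) :
    ∃ x, g^[m] x = x ∧ ∀ i, i ≤ m → g^[i] x ∈ Icc (lo i) (up i) := by
  have main : ∀ k, k ≤ m → ∃ s t, s ≤ t ∧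
      (∀ i, i ≤ k → g^[i] '' Icc s t ⊆ Icc (lo i) (up i)) ∧
      g^[k] '' Icc s t = Icc (lo k) (up k) := by
    intro k
    induction k with
    | zero =>
      intro _
      refine ⟨lo 0, up 0, hle 0, ?_, by simp⟩
      intro i hi0
      rw [Nat.le_zero] at hi0
      subst hi0
      simp
    | succ k ih =>
      intro hk1
      obtain ⟨s, t, hst, hall, hexact⟩ := ih (Nat.le_of_succ_le hk1)
      have hsub : Icc (lo (k+1)) (up (k+1)) ⊆ g^[k+1] '' Icc s t := by
        rw [Function.iterate_succ', Set.image_comp, hexact]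
        exact hcov k hk1
      obtain ⟨s', t', hs1, hst', ht1, himg⟩ := cover (hg.iterate (k+1)) (hle (k+1)) hsub
      refine ⟨s', t', hst', ?_, himg⟩
      intro i hik
      rcases Nat.lt_or_ge i (k+1) with h | h
      · exact (Set.image_mono (Icc_subset_Icc hs1 ht1)).trans (hall i (Nat.lt_succ_iff.mp h))
      · have hik' : i = k + 1 := le_antisymm hik h
        subst hik'
        rw [himg]
  obtain ⟨s, t, hst, hall, hexact⟩ := main m le_rfl
  have hsub0 : Icc s t ⊆ Icc (lo 0) (up 0) := by
    have := hall 0 (Nat.zero_le m)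
    simpa using this
  have hfull : g^[m] '' Icc s t = Icc (lo 0) (up 0) := by rw [hexact, hend1, hend2]
  have hlo0 : lo 0 ∈ g^[m] '' Icc s t := by
    rw [hfull]; exact left_mem_Icc.2 (hle 0)
  have hup0 : up 0 ∈ g^[m] '' Icc s t := by
    rw [hfull]; exact right_mem_Icc.2 (hle 0)
  obtain ⟨x1, hx1, hgx1⟩ := hlo0
  obtain ⟨x2, hx2, hgx2⟩ := hup0
  have h1 : g^[m] x1 ≤ x1 := by rw [hgx1]; exact (hsub0 hx1).1
  have h2 : x2 ≤ g^[m] x2 := by rw [hgx2]; exact (hsub0 hx2).2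
  set φ : ℝ → ℝ := fun y => g^[m] y - y with hφdef
  have hφc : Continuous φ := (hg.iterate m).sub continuous_id
  have h0 : (0:ℝ) ∈ uIcc (φ x1) (φ x2) := by
    rw [Set.mem_uIcc]
    left
    constructor
    · simp only [hφdef]; linarith
    · simp only [hφdef]; linarith
  obtain ⟨x, hxu, hφx⟩ := intermediate_value_uIcc hφc.continuousOn h0
  have hxst : x ∈ Icc s t := (Set.ordConnected_Icc.uIcc_subset hx1 hx2) hxu
  have hfix : g^[m] x = x := by
    have : g^[m] x - x = 0 := hφx
    linarith
  refine ⟨x, hfix, ?_⟩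
  intro i him
  exact hall i him ⟨x, hxst, rfl⟩

/-- Core lemma: a horseshoe where the possible common point `e` of the two intervals
is never mapped back into the second interval yields periodic points of all periods. -/
lemma core (g : ℝ → ℝ) (hg : Continuous g) (a b c d : ℝ) (hab : a < b) (hcd : c < d)
    (hint : ∀ x, x ∈ Icc a b → x ∈ Icc c d → g x ∉ Icc c d)
    (hI : Icc a b ∪ Icc c d ⊆ g '' Icc a b)
    (hJ : Icc a b ∪ Icc c d ⊆ g '' Icc c d)
    (m : ℕ) (hm : 1 ≤ m) :
    ∃ x, Function.minimalPeriod g x = m := by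
  classical
  set lo : ℕ → ℝ := fun i => if i = 0 ∨ i = m then a else c with hlodef
  set up : ℕ → ℝ := fun i => if i = 0 ∨ i = m then b else d with hupdef
  have hpat : ∀ j, (lo j = a ∧ up j = b) ∨ (lo j = c ∧ up j = d) := by
    intro j
    by_cases h : j = 0 ∨ j = m
    · left; simp [hlodef, hupdef, h]
    · right; simp [hlodef, hupdef, h]
  have hle : ∀ i, lo i ≤ up i := by
    intro i
    rcases hpat i with ⟨h1, h2⟩ | ⟨h1, h2⟩ <;> rw [h1, h2]
    exacts [hab.le, hcd.le]
  have hend1 : lo m = lo 0 := by simp [hlodef]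
  have hend2 : up m = up 0 := by simp [hupdef]
  have hcov : ∀ i, i < m → Icc (lo (i+1)) (up (i+1)) ⊆ g '' Icc (lo i) (up i) := by
    intro i _
    rcases hpat (i+1) with ⟨h1, h2⟩ | ⟨h1, h2⟩ <;>
      rcases hpat i with ⟨h3, h4⟩ | ⟨h3, h4⟩ <;> rw [h1, h2, h3, h4]
    · exact subset_trans subset_union_left hI
    · exact subset_trans subset_union_left hJ
    · exact subset_trans subset_union_right hI
    · exact subset_trans subset_union_right hJ
  obtain ⟨x, hfix, hitin⟩ := itinerary g hg m lo up hle hend1 hend2 hcov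
  have hlo0 : lo 0 = a := by simp [hlodef]
  have hup0 : up 0 = b := by simp [hupdef]
  have hx0 : x ∈ Icc a b := by
    have := hitin 0 (Nat.zero_le m)
    rw [hlo0, hup0] at this
    simpa using this
  have hper : Function.IsPeriodicPt g m x := hfix
  have hpos : 0 < Function.minimalPeriod g x := hper.minimalPeriod_pos hm
  have hdvd : Function.minimalPeriod g x ∣ m := hper.minimalPeriod_dvd
  set q := Function.minimalPeriod g x with hqdef
  have hqm : q ≤ m := Nat.le_of_dvd hm hdvd
  rcases eq_or_lt_of_le hqm with he | hl
  · exact ⟨x, he⟩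
  · exfalso
    have hm2 : 2 ≤ m := by omega
    have hq0 : ¬(q = 0 ∨ q = m) := by omega
    have h10 : ¬((1:ℕ) = 0 ∨ (1:ℕ) = m) := by omega
    have hxq : g^[q] x = x := Function.iterate_minimalPeriod
    have hxJ : x ∈ Icc c d := by
      have := hitin q hqm
      rw [hxq] at this
      have hlq : lo q = c := by simp [hlodef, hq0]
      have huq : up q = d := by simp [hupdef, hq0]
      rwa [hlq, huq] at this
    have h1J : g x ∈ Icc c d := by
      have := hitin 1 (by omega)
      have hl1 : lo 1 = c := by simp only [hlodef]; rw [if_neg h10]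
      have hu1 : up 1 = d := by simp only [hupdef]; rw [if_neg h10]
      rw [hl1, hu1, Function.iterate_one] at this
      exact this
    exact hint x hx0 hxJ h1J

lemma hull_cover {g : ℝ → ℝ} (hg : Continuous g) {u v A D α δ : ℝ}
    (hα : α ∈ Icc u v) (hδ : δ ∈ Icc u v) (hgα : g α = A) (hgδ : g δ = D) (hAD : A ≤ D) :
    Icc A D ⊆ g '' Icc u v := by
  have h1 : uIcc (g α) (g δ) ⊆ g '' uIcc α δ := intermediate_value_uIcc hg.continuousOn
  rw [hgα, hgδ, uIcc_of_le hAD] at h1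
  exact h1.trans (Set.image_mono (Set.ordConnected_Icc.uIcc_subset hα hδ))

/-- If `f^[n]` has a horseshoe (two closed intervals with disjoint interiors, each
mapped by `f^[n]` over their union), then `f^[n]` has periodic points of every
period `m ≥ 1`; in particular there is a point of period `3` for `f^[n]`, which is
a periodic point of `f` of period dividing into `3n` (a point `x` with
`f^[3n] x = x`). -/
theorem horseshoe_gives_all_periods
    (f : ℝ → ℝ) (hf : Continuous f) (n : ℕ) (hn : 1 ≤ n)
    (a b c d : ℝ) (hab : a < b) (hcd : c < d)
    (hdisj : Disjoint (Set.Ioo a b) (Set.Ioo c d))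
    (hI : Set.Icc a b ∪ Set.Icc c d ⊆ f^[n] '' Set.Icc a b)
    (hJ : Set.Icc a b ∪ Set.Icc c d ⊆ f^[n] '' Set.Icc c d) :
    (∀ m : ℕ, 1 ≤ m → ∃ x : ℝ, Function.minimalPeriod (f^[n]) x = m) ∧
    ∃ x : ℝ, Function.minimalPeriod (f^[n]) x = 3 ∧
      Function.IsPeriodicPt f (3 * n) x := by
  set g := f^[n] with hgdef
  have hg : Continuous g := hf.iterate n
  have horder : b ≤ c ∨ d ≤ a := by
    by_contra h
    push_neg at h
    obtain ⟨h1, h2⟩ := h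
    set u := max a c with hu
    set w := min b d with hw
    have huw : u < w := max_lt (lt_min hab h2) (lt_min h1 hcd)
    set x := (u + w) / 2 with hx
    have hau : a ≤ u := le_max_left a c
    have hcu : c ≤ u := le_max_right a c
    have hwb : w ≤ b := min_le_left b d
    have hwd : w ≤ d := min_le_right b d
    have hm1 : x ∈ Set.Ioo a b := ⟨by simp only [hx]; linarith, by simp only [hx]; linarith⟩
    have hm2 : x ∈ Set.Ioo c d := ⟨by simp only [hx]; linarith, by simp only [hx]; linarith⟩
    exact (Set.disjoint_left.1 hdisj) hm1 hm2
  have key : ∀ m : ℕ, 1 ≤ m → ∃ x : ℝ, Function.minimalPeriod g x = m := by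
    intro m hm
    rcases horder with hbc | hda
    · rcases eq_or_lt_of_le hbc with heq | hlt
      · -- b = c
        by_cases hge1 : g b ∈ Icc c d
        · by_cases hge2 : g b ∈ Icc a b
          · -- g b = b : reduction, shrink J to avoid b
            have hgb : g b = b := le_antisymm hge2.2 (heq ▸ hge1.1)
            have had : a < d := hab.trans (heq ▸ hcd)
            obtain ⟨tA, htA, hgtA⟩ := hJ (Or.inl (left_mem_Icc.2 hab.le))
            obtain ⟨tD, htD, hgtD⟩ := hJ (Or.inr (right_mem_Icc.2 hcd.le))
            have hbtA : b < tA := by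
              rcases eq_or_lt_of_le (heq ▸ htA.1 : b ≤ tA) with h | h
              · exfalso; rw [← h, hgb] at hgtA; exact absurd hgtA hab.ne'
              · exact h
            have hbtD : b < tD := by
              rcases eq_or_lt_of_le (heq ▸ htD.1 : b ≤ tD) with h | h
              · exfalso; rw [← h, hgb] at hgtD; rw [← hgtD, heq] at hcd; exact lt_irrefl _ hcd
              · exact h
            have hne : tA ≠ tD := by
              intro h; rw [h, hgtD] at hgtA; exact absurd hgtA had.ne'
            set lo' := min tA tD with hlo'
            set up' := max tA tD with hup'
            have hlu : lo' < up' := min_lt_max.2 hne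
            have hbl : b < lo' := lt_min hbtA hbtD
            have hJ'sub : Icc lo' up' ⊆ Icc c d :=
              Icc_subset_Icc (le_min htA.1 htD.1) (max_le htA.2 htD.2)
            have hullI : Icc a d ⊆ g '' Icc a b := by
              obtain ⟨α1, hα1, hgα1⟩ := hI (Or.inl (left_mem_Icc.2 hab.le))
              obtain ⟨δ1, hδ1, hgδ1⟩ := hI (Or.inr (right_mem_Icc.2 hcd.le))
              exact hull_cover hg hα1 hδ1 hgα1 hgδ1 had.le
            have hullJ' : Icc a d ⊆ g '' Icc lo' up' := by
              refine hull_cover hg (α := tA) (δ := tD) ?_ ?_ hgtA hgtD had.le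
              · exact ⟨min_le_left _ _, le_max_left _ _⟩
              · exact ⟨min_le_right _ _, le_max_right _ _⟩
            have hIad : Icc a b ⊆ Icc a d := Icc_subset_Icc le_rfl (by linarith [heq ▸ hcd.le])
            have hJ'ad : Icc lo' up' ⊆ Icc a d :=
              hJ'sub.trans (Icc_subset_Icc (by linarith) le_rfl)
            have hI2 : Icc a b ∪ Icc lo' up' ⊆ g '' Icc a b :=
              union_subset (hIad.trans hullI) (hJ'ad.trans hullI)
            have hJ2 : Icc a b ∪ Icc lo' up' ⊆ g '' Icc lo' up' :=
              union_subset (hIad.trans hullJ') (hJ'ad.trans hullJ')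
            refine core g hg a b lo' up' hab hlu ?_ hI2 hJ2 m hm
            intro x h1 h2
            exact absurd h1.2 (not_le.2 (hbl.trans_le h2.1))
          · -- g b ∈ J, g b ∉ I : swap roles
            refine core g hg c d a b hcd hab ?_ (by rw [Set.union_comm]; exact hJ)
              (by rw [Set.union_comm]; exact hI) m hm
            intro x hxJ hxI
            have hxb : x = b := le_antisymm hxI.2 (heq ▸ hxJ.1)
            rw [hxb]; exact hge2
        · refine core g hg a b c d hab hcd ?_ hI hJ m hm
          intro x hxI hxJ
          have hxb : x = b := le_antisymm hxI.2 (heq ▸ hxJ.1)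
          rw [hxb]; exact hge1
      · -- b < c : disjoint
        refine core g hg a b c d hab hcd ?_ hI hJ m hm
        intro x hxI hxJ
        exact absurd (hxI.2.trans_lt (hlt.trans_le hxJ.1)) (lt_irrefl x)
    · rcases eq_or_lt_of_le hda with heq | hlt
      · -- d = a
        by_cases hge1 : g a ∈ Icc c d
        · by_cases hge2 : g a ∈ Icc a b
          · -- g a = a : reduction, shrink J to avoid a
            have hga : g a = a := le_antisymm (heq ▸ hge1.2) hge2.1
            have hcb : c < b := (hcd.trans_le heq.le).trans hab
            obtain ⟨tA, htA, hgtA⟩ := hJ (Or.inr (left_mem_Icc.2 hcd.le))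
            obtain ⟨tD, htD, hgtD⟩ := hJ (Or.inl (right_mem_Icc.2 hab.le))
            have htAa : tA < a := by
              rcases eq_or_lt_of_le (heq ▸ htA.2 : tA ≤ a) with h | h
              · exfalso; rw [h, hga] at hgtA
                rw [← hgtA, heq] at hcd; exact lt_irrefl _ hcd
              · exact h
            have htDa : tD < a := by
              rcases eq_or_lt_of_le (heq ▸ htD.2 : tD ≤ a) with h | h
              · exfalso; rw [h, hga] at hgtD; exact absurd hgtD hab.ne
              · exact h
            have hne : tA ≠ tD := by
              intro h; rw [h, hgtD] at hgtA; exact absurd hgtA hcb.ne'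
            set lo' := min tA tD with hlo'
            set up' := max tA tD with hup'
            have hlu : lo' < up' := min_lt_max.2 hne
            have hua : up' < a := max_lt htAa htDa
            have hJ'sub : Icc lo' up' ⊆ Icc c d :=
              Icc_subset_Icc (le_min htA.1 htD.1) (max_le htA.2 htD.2)
            have hullI : Icc c b ⊆ g '' Icc a b := by
              obtain ⟨α1, hα1, hgα1⟩ := hI (Or.inr (left_mem_Icc.2 hcd.le))
              obtain ⟨δ1, hδ1, hgδ1⟩ := hI (Or.inl (right_mem_Icc.2 hab.le))
              exact hull_cover hg hα1 hδ1 hgα1 hgδ1 hcb.le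
            have hullJ' : Icc c b ⊆ g '' Icc lo' up' := by
              refine hull_cover hg (α := tA) (δ := tD) ?_ ?_ hgtA hgtD hcb.le
              · exact ⟨min_le_left _ _, le_max_left _ _⟩
              · exact ⟨min_le_right _ _, le_max_right _ _⟩
            have hIcb : Icc a b ⊆ Icc c b := Icc_subset_Icc (by linarith [heq ▸ hcd.le]) le_rfl
            have hJ'cb : Icc lo' up' ⊆ Icc c b :=
              hJ'sub.trans (Icc_subset_Icc le_rfl (by linarith))
            have hI2 : Icc a b ∪ Icc lo' up' ⊆ g '' Icc a b :=
              union_subset (hIcb.trans hullI) (hJ'cb.trans hullI)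
            have hJ2 : Icc a b ∪ Icc lo' up' ⊆ g '' Icc lo' up' :=
              union_subset (hIcb.trans hullJ') (hJ'cb.trans hullJ')
            refine core g hg a b lo' up' hab hlu ?_ hI2 hJ2 m hm
            intro x h1 h2
            exact absurd h1.1 (not_le.2 (h2.2.trans_lt hua))
          · refine core g hg c d a b hcd hab ?_ (by rw [Set.union_comm]; exact hJ)
              (by rw [Set.union_comm]; exact hI) m hm
            intro x hxJ hxI
            have hxa : x = a := le_antisymm (heq ▸ hxJ.2) hxI.1
            rw [hxa]; exact hge2
        · refine core g hg a b c d hab hcd ?_ hI hJ m hm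
          intro x hxI hxJ
          have hxa : x = a := le_antisymm (heq ▸ hxJ.2) hxI.1
          rw [hxa]; exact hge1
      · refine core g hg a b c d hab hcd ?_ hI hJ m hm
        intro x hxI hxJ
        exact absurd (hxJ.2.trans_lt (hlt.trans_le hxI.1)) (lt_irrefl x)
  refine ⟨key, ?_⟩
  obtain ⟨x, hx⟩ := key 3 (by norm_num)
  refine ⟨x, hx, ?_⟩
  have h3 : g^[3] x = x := by
    have h := Function.isPeriodicPt_minimalPeriod g x
    rw [hx] at h
    exact h
  show f^[3 * n] x = x
  rw [mul_comm, Function.iterate_mul]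
  exact h3
end

section
/- Let f be a continuous interval map with a cycle P having a block structure over a cycle structure D (i.e., blocks X_1,...,X_n cyclically permuted by f). Suppose for each i the restriction of f^n to X_i has the property that every cycle of f^n contained in the convex hull of X_i has a division, with X_i = X_i' ∪ X_i'' where f^n interchanges X_i' and X_i'' and their convex hulls are disjoint. Then f maps half-blocks to half-blocks: if x, y ∈ P lie in the same half-block, so do f(x) and f(y). Consequently P has a block structure of period 2n refining the given one. -/
/-- `P` is a cycle (single periodic orbit) of `f`. -/
def IsCycleOf (f : ℝ → ℝ) (P : Finset ℝ) : Prop :=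
  P.Nonempty ∧ (∀ x ∈ P, f x ∈ P) ∧ ∃ x ∈ P, ∀ y ∈ P, ∃ m : ℕ, f^[m] x = y

/-- Let `P` be a cycle of `f` with a block structure with `n` blocks `X_i` (block
assignment `B`, blocks cyclically permuted: `B (f x) = B x + 1`). Suppose each
block splits into two half-blocks (indicated by `H`), with the half-blocks of a
block having disjoint convex hulls and interchanged by `f^[n]`. Then `f` maps
half-blocks to half-blocks, and consequently `P` has a block structure of period
`2n` refining the given one. -/
theorem half_blocks_mapped_to_half_blocks
    (f : ℝ → ℝ) (P : Finset ℝ) (hcyc : IsCycleOf f P)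
    (n : ℕ) [NeZero n] (hn : 1 < n) (hnP : n < P.card)
    (B : ℝ → Fin n) (hmono : MonotoneOn B (P : Set ℝ))
    (hsurj : ∀ j : Fin n, ∃ x ∈ P, B x = j)
    (hBf : ∀ x ∈ P, B (f x) = B x + 1)
    (H : ℝ → Bool)
    (hflip : ∀ x ∈ P, H (f^[n] x) = ! H x)
    (hconv : ∀ x ∈ P, ∀ y ∈ P, ∀ z ∈ P, x ≤ y → y ≤ z → B x = B z → H x = H z →
      H y = H x) :
    (∀ x ∈ P, ∀ y ∈ P, B x = B y → H x = H y →
      B (f x) = B (f y) ∧ H (f x) = H (f y)) ∧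
    ∃ B' : ℝ → Fin (2 * n), MonotoneOn B' (P : Set ℝ) ∧
      (∀ j : Fin (2 * n), ∃ x ∈ P, B' x = j) ∧
      (∃ τ' : Equiv.Perm (Fin (2 * n)), ∀ x ∈ P, B' (f x) = τ' (B' x)) ∧
      (∀ x ∈ P, ∀ y ∈ P, B' x = B' y → B x = B y ∧ H x = H y) := by
  classical
  obtain ⟨hne, hinv, x₀, hx₀P, horb⟩ := hcyc
  -- iterates stay in P
  have hit : ∀ x ∈ P, ∀ m : ℕ, f^[m] x ∈ P := by
    intro x hx m
    induction m with
    | zero => simpa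
    | succ m ih => rw [Function.iterate_succ_apply']; exact hinv _ ih
  -- B along iterates
  open Fin.NatCast in
  have hBit : ∀ x ∈ P, ∀ m : ℕ, B (f^[m] x) = B x + (m : Fin n) := by
    intro x hx m
    induction m with
    | zero => simp
    | succ m ih =>
      rw [Function.iterate_succ_apply', hBf _ (hit x hx m), ih]
      push_cast
      simp [Nat.cast_succ, add_assoc]
  -- H along multiples of n
  have hHit : ∀ x ∈ P, ∀ c : ℕ,
      H (f^[c * n] x) = if c % 2 = 0 then H x else !(H x) := by
    intro x hx c
    induction c with
    | zero => simp
    | succ c ih =>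
      have he : (c + 1) * n = n + c * n := by ring
      rw [he, Function.iterate_add_apply, hflip _ (hit x hx _), ih]
      rcases Nat.even_or_odd c with h | h
      · have h1 : c % 2 = 0 := Nat.even_iff.mp h
        have h2 : (c + 1) % 2 = 1 := by omega
        simp [h1, h2]
      · have h1 : c % 2 = 1 := Nat.odd_iff.mp h
        have h2 : (c + 1) % 2 = 0 := by omega
        simp [h1, h2]
  -- same block implies related by an iterate of f^[n]
  open Fin.NatCast in
  have key : ∀ x ∈ P, ∀ y ∈ P, B x = B y →
      ∃ c : ℕ, y = f^[c * n] x ∨ x = f^[c * n] y := by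
    intro x hx y hy hBxy
    obtain ⟨a, ha⟩ := horb x hx
    obtain ⟨b, hb⟩ := horb y hy
    have hBa := hBit x₀ hx₀P a
    have hBb := hBit x₀ hx₀P b
    rw [ha] at hBa; rw [hb] at hBb
    have hcast : (a : Fin n) = (b : Fin n) := by
      have h := hBxy; rw [hBa, hBb] at h; exact add_left_cancel h
    rcases le_total a b with hab | hab
    · have hdvd : n ∣ b - a := by
        rw [← Fin.natCast_eq_zero (n := n)]
        have : ((b - a : ℕ) : Fin n) + (a : Fin n) = (b : Fin n) := by
          rw [← Nat.cast_add]
          congr 1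
          omega
        rw [hcast] at this
        exact add_eq_right.mp this
      obtain ⟨c, hc⟩ := hdvd
      refine ⟨c, Or.inl ?_⟩
      have hb' : b = c * n + a := by rw [mul_comm]; omega
      rw [← hb, hb', Function.iterate_add_apply, ha]
    · have hdvd : n ∣ a - b := by
        rw [← Fin.natCast_eq_zero (n := n)]
        have : ((a - b : ℕ) : Fin n) + (b : Fin n) = (a : Fin n) := by
          rw [← Nat.cast_add]
          congr 1
          omega
        rw [← hcast] at this
        exact add_eq_right.mp this
      obtain ⟨c, hc⟩ := hdvd
      refine ⟨c, Or.inr ?_⟩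
      have ha' : a = c * n + b := by rw [mul_comm]; omega
      rw [← ha, ha', Function.iterate_add_apply, hb]
  -- parity equivalence
  have helper : ∀ x ∈ P, ∀ c : ℕ,
      (H x = H (f^[c * n] x) ↔ H (f x) = H (f (f^[c * n] x))) := by
    intro x hx c
    have hcomm : f (f^[c * n] x) = f^[c * n] (f x) :=
      (Function.iterate_succ_apply' f (c * n) x).symm.trans
        (Function.iterate_succ_apply f (c * n) x)
    rw [hHit x hx c, hcomm, hHit (f x) (hinv x hx) c]
    by_cases h : c % 2 = 0 <;> simp [h]
  have hparity : ∀ x ∈ P, ∀ y ∈ P, B x = B y →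
      (H x = H y ↔ H (f x) = H (f y)) := by
    intro x hx y hy hBxy
    obtain ⟨c, hc | hc⟩ := key x hx y hy hBxy
    · rw [hc]; exact helper x hx c
    · rw [hc]
      constructor
      · intro h'; exact ((helper y hy c).mp h'.symm).symm
      · intro h'; exact ((helper y hy c).mpr h'.symm).symm
  have claim1 : ∀ x ∈ P, ∀ y ∈ P, B x = B y → H x = H y →
      B (f x) = B (f y) ∧ H (f x) = H (f y) := by
    intro x hx y hy hBxy hHxy
    exact ⟨by rw [hBf x hx, hBf y hy, hBxy], (hparity x hx y hy hBxy).mp hHxy⟩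
  refine ⟨claim1, ?_⟩
  -- blocks as finsets, minimal elements
  have hQne : ∀ j : Fin n, (P.filter (fun x => B x = j)).Nonempty := by
    intro j
    obtain ⟨x, hx, hBx⟩ := hsurj j
    exact ⟨x, Finset.mem_filter.mpr ⟨hx, hBx⟩⟩
  set m : Fin n → ℝ := fun j => (P.filter (fun x => B x = j)).min' (hQne j) with hm
  have hmP : ∀ j, m j ∈ P ∧ B (m j) = j := by
    intro j
    have h := (P.filter (fun x => B x = j)).min'_mem (hQne j)
    exact Finset.mem_filter.mp h
  have hmle : ∀ x ∈ P, m (B x) ≤ x := by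
    intro x hx
    have hxmem : x ∈ P.filter (fun y => B y = B x) := Finset.mem_filter.mpr ⟨hx, rfl⟩
    exact Finset.min'_le _ _ hxmem
  set bit : ℝ → ℕ := fun x => if H x = H (m (B x)) then 0 else 1 with hbit
  have hbitlt : ∀ x, bit x < 2 := by
    intro x; simp only [hbit]; split <;> omega
  set B' : ℝ → Fin (2 * n) := fun x =>
    ⟨2 * (B x).val + bit x, by have := (B x).isLt; have := hbitlt x; omega⟩ with hB'
  -- B' determined by B and H
  have hB'ext : ∀ x y, B x = B y → H x = H y → B' x = B' y := by
    intro x y h1 h2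
    simp only [hB', hbit, h1, h2]
  have hB'inj : ∀ x ∈ P, ∀ y ∈ P, B' x = B' y → B x = B y ∧ H x = H y := by
    intro x hx y hy h
    have hval : 2 * (B x).val + bit x = 2 * (B y).val + bit y :=
      congrArg Fin.val h
    have h1 := hbitlt x; have h2 := hbitlt y
    have hBv : (B x).val = (B y).val := by omega
    have hBxy : B x = B y := Fin.ext hBv
    have hbxy : bit x = bit y := by omega
    refine ⟨hBxy, ?_⟩
    simp only [hbit, hBxy] at hbxy
    by_cases hx1 : H x = H (m (B y)) <;> by_cases hy1 : H y = H (m (B y))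
    · rw [hx1, hy1]
    · simp [hx1, hy1] at hbxy
    · simp [hx1, hy1] at hbxy
    · revert hx1 hy1
      cases H x <;> cases H y <;> cases H (m (B y)) <;> simp
  -- monotone
  have hB'mono : MonotoneOn B' (P : Set ℝ) := by
    intro x hx y hy hxy
    have hBle : B x ≤ B y := hmono hx hy hxy
    simp only [hB', Fin.mk_le_mk]
    rcases lt_or_eq_of_le hBle with hlt | heq
    · have : (B x).val < (B y).val := hlt
      have := hbitlt x; have := hbitlt y; omega
    · have hv : (B x).val = (B y).val := by rw [heq]
      have hbl : bit x ≤ bit y := by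
        simp only [hbit]
        split
        · omega
        · rename_i hx1
          split
          · rename_i hy1
            exfalso
            apply hx1
            have hmPx := hmP (B x)
            exact hconv (m (B x)) hmPx.1 x hx y hy (hmle x hx) hxy
              (by rw [hmPx.2, heq]) (by rw [heq]; exact hy1.symm)
          · omega
      omega
  -- surjective
  open Fin.NatCast in
  have hB'surj : ∀ j : Fin (2 * n), ∃ x ∈ P, B' x = j := by
    intro j
    have hjlt := j.isLt
    set i : Fin n := ⟨j.val / 2, by omega⟩ with hi
    have hmPi := hmP i
    rcases Nat.even_or_odd j.val with he | ho
    · refine ⟨m i, hmPi.1, ?_⟩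
      apply Fin.ext
      show 2 * (B (m i)).val + (if H (m i) = H (m (B (m i))) then 0 else 1) = j.val
      rw [hmPi.2, if_pos rfl]
      have hiv : i.val = j.val / 2 := rfl
      have : j.val % 2 = 0 := Nat.even_iff.mp he
      omega
    · refine ⟨f^[n] (m i), hit _ hmPi.1 n, ?_⟩
      have hBfn : B (f^[n] (m i)) = i := by
        rw [hBit _ hmPi.1 n, hmPi.2, Fin.natCast_self, add_zero]
      have hHfn : H (f^[n] (m i)) = ! H (m i) := hflip _ hmPi.1
      apply Fin.ext
      show 2 * (B (f^[n] (m i))).val +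
        (if H (f^[n] (m i)) = H (m (B (f^[n] (m i)))) then 0 else 1) = j.val
      rw [hBfn, hHfn]
      have hne' : (! H (m i)) ≠ H (m i) := by cases H (m i) <;> simp
      rw [if_neg hne']
      have hiv : i.val = j.val / 2 := rfl
      have : j.val % 2 = 1 := Nat.odd_iff.mp ho
      omega
  refine ⟨B', hB'mono, hB'surj, ?_, hB'inj⟩
  -- the permutation
  choose rep hrepP hrepB using hB'surj
  set g : Fin (2 * n) → Fin (2 * n) := fun j => B' (f (rep j)) with hg
  have hgspec : ∀ x ∈ P, B' (f x) = g (B' x) := by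
    intro x hx
    have h1 := hB'inj _ (hrepP (B' x)) _ hx (hrepB (B' x))
    have h2 := claim1 _ (hrepP (B' x)) _ hx h1.1 h1.2
    exact (hB'ext _ _ h2.1 h2.2).symm
  have hginj : Function.Injective g := by
    intro j k hjk
    simp only [hg] at hjk
    have hj := hrepP j; have hk := hrepP k
    have h1 := hB'inj _ (hinv _ hj) _ (hinv _ hk) hjk
    have hBjk : B (rep j) = B (rep k) := by
      have := h1.1
      rw [hBf _ hj, hBf _ hk] at this
      exact add_right_cancel this
    have hHjk : H (rep j) = H (rep k) :=
      (hparity _ hj _ hk hBjk).mpr h1.2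
    rw [← hrepB j, ← hrepB k]
    exact hB'ext _ _ hBjk hHjk
  refine ⟨Equiv.ofBijective g (Finite.injective_iff_bijective.mp hginj), ?_⟩
  intro x hx
  rw [Equiv.ofBijective_apply]
  exact hgspec x hx
end
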